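/- Fix Λ > 0. For λ ≥ 5, the kernel of the linear map D(λ) : ℝ × ℝ³' × ℝ × S → ℝ × ℝ³' given by D(λ)(u_NN, u_NT, u_TT1, u_TT0) = ((1/2)(λ-6)·u_NN + (3/2)(λ-2)·u_TT1, (λ-4)·u_NT) equals the image of the linear map L(λ)(u_NN, u_NT, u_TT1, u_TT0) = (3(λ-2)·u_NN + 3λ(2-λ)·u_TT1, 0, (6-λ)·u_NN + λ(λ-6)·u_TT1, λ(λ-3)·u_TT0), where S denotes the space of trace-free symmetric tangential 2-tensors and ℝ³' the space of tangential covectors at a point. -/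

import Mathlib

/-!
The scalar block of `L(λ)` factors through `u_NN - λ u_TT1`: it is
`(u_NN - λ u_TT1) • (3(λ-2), 6-λ)`, a line which is exactly the kernel of the scalar row
`((λ-6)/2, 3(λ-2)/2)` of `D(λ)` as soon as `λ ≠ 2`. On `T'` the kernel of `(λ-4)•` is zero
because `λ ≠ 4`, and on `S` the map `λ(λ-3)•` is onto because `λ(λ-3) ≠ 0`.
-/

theorem indicial_scalar_block_exact {lam : ℝ} (hlam : lam ≠ 2) (a c : ℝ) :
    (1 / 2) * (lam - 6) * a + (3 / 2) * (lam - 2) * c = 0 ↔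
      ∃ x y : ℝ, 3 * (lam - 2) * x + 3 * lam * (2 - lam) * y = a ∧
        (6 - lam) * x + lam * (lam - 6) * y = c := by
  have h2 : lam - 2 ≠ 0 := sub_ne_zero.mpr hlam
  constructor
  · intro h
    refine ⟨a / (3 * (lam - 2)), 0, by field_simp; ring, ?_⟩
    field_simp
    linarith
  · rintro ⟨x, y, rfl, rfl⟩
    ring

theorem exists_smul_eq_of_ne_zero {K M : Type*} [DivisionRing K] [AddCommGroup M] [Module K M]
    {r : K} (hr : r ≠ 0) (s : M) : ∃ z : M, r • z = s :=
  ⟨r⁻¹ • s, smul_inv_smul₀ hr s⟩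

/-- Pointwise exactness, for `λ ≥ 5`, of the indicial families
`D(λ) = (3/Λ)·I(δ_g G_g, λ)` and `L(λ) = (3/Λ)·I(L_{0,g_dS,0}, λ)` in the refined splitting
`(u_NN, u_NT, u_TT1, u_TT0) ∈ ℝ × T' × ℝ × S` (`T'` tangential covectors, `S` trace-free
symmetric tangential 2-tensors): `ker D(λ) = range L(λ)`. -/
theorem stmt_18 (lam : ℝ) (hlam : 5 ≤ lam) {T' S : Type*}
    [AddCommGroup T'] [Module ℝ T'] [AddCommGroup S] [Module ℝ S] :
    {u : ℝ × T' × ℝ × S |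
        (1 / 2) * (lam - 6) * u.1 + (3 / 2) * (lam - 2) * u.2.2.1 = 0 ∧
        (lam - 4) • u.2.1 = 0}
      = Set.range (fun u : ℝ × T' × ℝ × S =>
          ((3 * (lam - 2) * u.1 + 3 * lam * (2 - lam) * u.2.2.1,
            (0 : T'),
            (6 - lam) * u.1 + lam * (lam - 6) * u.2.2.1,
            (lam * (lam - 3)) • u.2.2.2) : ℝ × T' × ℝ × S)) := by
  have h2 : lam ≠ 2 := by linarith
  have h4 : lam - 4 ≠ 0 := by linarith
  have h03 : lam * (lam - 3) ≠ 0 := by nlinarith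
  ext ⟨a, t, c, s⟩
  obtain ⟨z, hz⟩ := exists_smul_eq_of_ne_zero h03 s
  simp only [Set.mem_ofPred_eq, Set.mem_range, Prod.ext_iff, Prod.exists,
    indicial_scalar_block_exact h2, smul_eq_zero_iff_right h4]
  constructor
  · rintro ⟨⟨x, y, ha, hc⟩, rfl⟩
    exact ⟨x, 0, y, z, ha, rfl, hc, hz⟩
  · rintro ⟨x, -, y, -, ha, rfl, hc, -⟩
    exact ⟨⟨x, y, ha, hc⟩, rfl⟩
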